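/- arXiv:2408.06987 — 2 statements merged into one kernel-verified Lean document; each statement's English description precedes it below -/
import Mathlib

section
/- Let X be an n×n real matrix with zero diagonal and all entries in {-1,0,1}. Then the sum over all quadruples (i1,i2,i3,i4) of distinct indices of X_{i1 i2} X_{i3 i2} X_{i3 i4} X_{i1 i4} equals tr((XXᵀ)²) − tr(XXᵀ ∘ XXᵀ) − tr(XᵀX ∘ XᵀX) + 1ᵀ|X|1, where ∘ denotes the Hadamard (entrywise) product, |X| is the entrywise absolute value matrix, and 1 is the all-ones vector. -/
open Matrix BigOperators

theorem stmt0 {n : ℕ} (X : Matrix (Fin n) (Fin n) ℝ)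
    (hdiag : ∀ i, X i i = 0)
    (hval : ∀ i j, X i j = -1 ∨ X i j = 0 ∨ X i j = 1) :
    (∑ i1 : Fin n, ∑ i2 : Fin n, ∑ i3 : Fin n, ∑ i4 : Fin n,
      if i1 ≠ i2 ∧ i1 ≠ i3 ∧ i1 ≠ i4 ∧ i2 ≠ i3 ∧ i2 ≠ i4 ∧ i3 ≠ i4 then
        X i1 i2 * X i3 i2 * X i3 i4 * X i1 i4 else 0)
    = Matrix.trace ((X * Xᵀ) ^ 2)
      - Matrix.trace (Matrix.hadamard (X * Xᵀ) (X * Xᵀ))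
      - Matrix.trace (Matrix.hadamard (Xᵀ * X) (Xᵀ * X))
      + ∑ i : Fin n, ∑ j : Fin n, |X i j| := by
  -- pointwise inclusion-exclusion
  have key : ∀ i1 i2 i3 i4 : Fin n,
      (if i1 ≠ i2 ∧ i1 ≠ i3 ∧ i1 ≠ i4 ∧ i2 ≠ i3 ∧ i2 ≠ i4 ∧ i3 ≠ i4 then
        X i1 i2 * X i3 i2 * X i3 i4 * X i1 i4 else 0)
      = X i1 i2 * X i3 i2 * X i3 i4 * X i1 i4
        - (if i3 = i1 then X i1 i2 * X i3 i2 * X i3 i4 * X i1 i4 else 0)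
        - (if i4 = i2 then X i1 i2 * X i3 i2 * X i3 i4 * X i1 i4 else 0)
        + (if i3 = i1 ∧ i4 = i2 then X i1 i2 * X i3 i2 * X i3 i4 * X i1 i4 else 0) := by
    intro i1 i2 i3 i4
    by_cases h13 : i3 = i1
    · subst h13
      by_cases h24 : i4 = i2
      · subst h24; simp
      · simp [h24]
    · by_cases h24 : i4 = i2
      · rw [if_neg (fun h => h.2.2.2.2.1 h24.symm), if_neg h13, if_pos h24,
          if_neg (fun h => h13 h.1)]
        ring
      · by_cases h12 : i1 = i2
        · subst h12; simp [hdiag]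
        · by_cases h14 : i1 = i4
          · subst h14; simp [hdiag]
          · by_cases h32 : i3 = i2
            · subst h32; simp [hdiag]
            · by_cases h34 : i3 = i4
              · subst h34; simp [hdiag]
              · have hcond : i1 ≠ i2 ∧ i1 ≠ i3 ∧ i1 ≠ i4 ∧ i2 ≠ i3 ∧ i2 ≠ i4 ∧ i3 ≠ i4 :=
                  ⟨h12, fun h => h13 h.symm, h14, fun h => h32 h.symm,
                    fun h => h24 h.symm, h34⟩
                rw [if_pos hcond, if_neg h13, if_neg h24,
                  if_neg (fun h => h13 h.1)]
                ring
  have hA : (∑ i1 : Fin n, ∑ i2 : Fin n, ∑ i3 : Fin n, ∑ i4 : Fin n,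
      X i1 i2 * X i3 i2 * X i3 i4 * X i1 i4) = Matrix.trace ((X * Xᵀ) ^ 2) := by
    rw [pow_two, Matrix.trace]
    simp only [Matrix.diag, Matrix.mul_apply, Matrix.transpose_apply, Finset.sum_mul,
      Finset.mul_sum]
    refine Finset.sum_congr rfl fun i1 _ => ?_
    rw [Finset.sum_comm]
    refine Finset.sum_congr rfl fun i3 _ => ?_
    refine Finset.sum_congr rfl fun i2 _ => Finset.sum_congr rfl fun i4 _ => ?_
    ring
  have hB : (∑ i1 : Fin n, ∑ i2 : Fin n, ∑ i3 : Fin n, ∑ i4 : Fin n,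
      if i3 = i1 then X i1 i2 * X i3 i2 * X i3 i4 * X i1 i4 else 0)
      = Matrix.trace (Matrix.hadamard (X * Xᵀ) (X * Xᵀ)) := by
    simp only [Finset.sum_ite_irrel, Finset.sum_const_zero, Finset.sum_ite_eq',
      Finset.mem_univ, if_true]
    rw [Matrix.trace]
    simp only [Matrix.diag, Matrix.hadamard_apply, Matrix.mul_apply, Matrix.transpose_apply,
      Finset.sum_mul, Finset.mul_sum]
    refine Finset.sum_congr rfl fun i1 _ => Finset.sum_congr rfl fun i2 _ =>
      Finset.sum_congr rfl fun i4 _ => by ring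
  have hC : (∑ i1 : Fin n, ∑ i2 : Fin n, ∑ i3 : Fin n, ∑ i4 : Fin n,
      if i4 = i2 then X i1 i2 * X i3 i2 * X i3 i4 * X i1 i4 else 0)
      = Matrix.trace (Matrix.hadamard (Xᵀ * X) (Xᵀ * X)) := by
    simp only [Finset.sum_ite_eq', Finset.mem_univ, if_true]
    rw [Matrix.trace]
    simp only [Matrix.diag, Matrix.hadamard_apply, Matrix.mul_apply, Matrix.transpose_apply,
      Finset.sum_mul, Finset.mul_sum]
    rw [Finset.sum_comm]
    refine Finset.sum_congr rfl fun i2 _ => ?_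
    refine Finset.sum_congr rfl fun i1 _ => Finset.sum_congr rfl fun i3 _ => by ring
  have hD : (∑ i1 : Fin n, ∑ i2 : Fin n, ∑ i3 : Fin n, ∑ i4 : Fin n,
      if i3 = i1 ∧ i4 = i2 then X i1 i2 * X i3 i2 * X i3 i4 * X i1 i4 else 0)
      = ∑ i : Fin n, ∑ j : Fin n, |X i j| := by
    simp only [ite_and, Finset.sum_ite_irrel, Finset.sum_const_zero, Finset.sum_ite_eq',
      Finset.mem_univ, if_true]
    refine Finset.sum_congr rfl fun i _ => Finset.sum_congr rfl fun j _ => ?_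
    rcases hval i j with h | h | h <;> rw [h] <;> norm_num
  calc (∑ i1 : Fin n, ∑ i2 : Fin n, ∑ i3 : Fin n, ∑ i4 : Fin n,
      if i1 ≠ i2 ∧ i1 ≠ i3 ∧ i1 ≠ i4 ∧ i2 ≠ i3 ∧ i2 ≠ i4 ∧ i3 ≠ i4 then
        X i1 i2 * X i3 i2 * X i3 i4 * X i1 i4 else 0)
      = (∑ i1 : Fin n, ∑ i2 : Fin n, ∑ i3 : Fin n, ∑ i4 : Fin n,
          X i1 i2 * X i3 i2 * X i3 i4 * X i1 i4)
        - (∑ i1 : Fin n, ∑ i2 : Fin n, ∑ i3 : Fin n, ∑ i4 : Fin n,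
          if i3 = i1 then X i1 i2 * X i3 i2 * X i3 i4 * X i1 i4 else 0)
        - (∑ i1 : Fin n, ∑ i2 : Fin n, ∑ i3 : Fin n, ∑ i4 : Fin n,
          if i4 = i2 then X i1 i2 * X i3 i2 * X i3 i4 * X i1 i4 else 0)
        + (∑ i1 : Fin n, ∑ i2 : Fin n, ∑ i3 : Fin n, ∑ i4 : Fin n,
          if i3 = i1 ∧ i4 = i2 then X i1 i2 * X i3 i2 * X i3 i4 * X i1 i4 else 0) := by
        simp only [key, Finset.sum_add_distrib, Finset.sum_sub_distrib]
    _ = _ := by rw [hA, hB, hC, hD]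
end

section
/- Let Ω be an n×n matrix with nonnegative entries satisfying Ω_{ij} ≤ C·θ_i·ζ_j for all i, j, where θ, ζ ∈ ℝⁿ have nonnegative entries. Then the sum over all quadruples (i1, i2, j1, j2) that are NOT pairwise distinct of Ω_{i1 j1} Ω_{i1 j2} Ω_{i2 j1} Ω_{i2 j2} is at most 3C⁴·(‖θ‖₂⁴‖ζ‖₄⁴ + ‖ζ‖₂⁴‖θ‖₄⁴), where ‖·‖_p denotes the ℓ_p norm. -/
open Matrix BigOperators

private lemma amgm_aux (u v a : ℝ) (hu : 0 ≤ u) (hv : 0 ≤ v) (ha : 0 ≤ a)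
    (h : a ^ 2 ≤ u * v) : 2 * a ≤ u + v := by
  nlinarith [h, sq_nonneg (u - v), hu, hv, ha]

theorem stmt2 {n : ℕ} (C : ℝ) (hC : 0 < C) (θ ζ : Fin n → ℝ)
    (hθ : ∀ i, 0 ≤ θ i) (hζ : ∀ j, 0 ≤ ζ j)
    (Ω : Matrix (Fin n) (Fin n) ℝ)
    (hΩ0 : ∀ i j, 0 ≤ Ω i j) (hΩ : ∀ i j, Ω i j ≤ C * θ i * ζ j) :
    (∑ i1 : Fin n, ∑ i2 : Fin n, ∑ j1 : Fin n, ∑ j2 : Fin n,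
      if ¬(i1 ≠ i2 ∧ i1 ≠ j1 ∧ i1 ≠ j2 ∧ i2 ≠ j1 ∧ i2 ≠ j2 ∧ j1 ≠ j2) then
        Ω i1 j1 * Ω i1 j2 * Ω i2 j1 * Ω i2 j2 else 0)
    ≤ 3 * C ^ 4 * ((∑ i, θ i ^ 2) ^ 2 * (∑ j, ζ j ^ 4)
        + (∑ j, ζ j ^ 2) ^ 2 * (∑ i, θ i ^ 4)) := by
  classical
  set d : Fin n → Fin n → ℝ := fun a b => if a = b then (1:ℝ) else 0 with hd
  have hd0 : ∀ a b : Fin n, 0 ≤ d a b := by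
    intro a b; simp only [hd]; split <;> norm_num
  have hd1 : ∀ a b : Fin n, a = b → (1:ℝ) ≤ d a b := by
    intro a b hab; simp [hd, hab]
  have hp : ∀ i1 i2 j1 j2 : Fin n,
      (0:ℝ) ≤ θ i1 ^ 2 * θ i2 ^ 2 * ζ j1 ^ 2 * ζ j2 ^ 2 := by
    intro i1 i2 j1 j2; positivity
  have hprod : ∀ i1 i2 j1 j2 : Fin n,
      Ω i1 j1 * Ω i1 j2 * Ω i2 j1 * Ω i2 j2
        ≤ C ^ 4 * (θ i1 ^ 2 * θ i2 ^ 2 * ζ j1 ^ 2 * ζ j2 ^ 2) := by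
    intro i1 i2 j1 j2
    have hb : ∀ i j : Fin n, (0:ℝ) ≤ C * θ i * ζ j := fun i j =>
      mul_nonneg (mul_nonneg hC.le (hθ i)) (hζ j)
    have h1 : Ω i1 j1 * Ω i1 j2 * Ω i2 j1 * Ω i2 j2
        ≤ (C * θ i1 * ζ j1) * (C * θ i1 * ζ j2) * (C * θ i2 * ζ j1)
          * (C * θ i2 * ζ j2) := by
      apply mul_le_mul (mul_le_mul (mul_le_mul (hΩ _ _) (hΩ _ _) (hΩ0 _ _)
        (hb _ _)) (hΩ _ _) (hΩ0 _ _) (mul_nonneg (hb _ _) (hb _ _))) (hΩ _ _)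
        (hΩ0 _ _) (mul_nonneg (mul_nonneg (hb _ _) (hb _ _)) (hb _ _))
    calc Ω i1 j1 * Ω i1 j2 * Ω i2 j1 * Ω i2 j2
        ≤ (C * θ i1 * ζ j1) * (C * θ i1 * ζ j2) * (C * θ i2 * ζ j1)
          * (C * θ i2 * ζ j2) := h1
      _ = C ^ 4 * (θ i1 ^ 2 * θ i2 ^ 2 * ζ j1 ^ 2 * ζ j2 ^ 2) := by ring
  have key : ∀ i1 i2 j1 j2 : Fin n,
      (if ¬(i1 ≠ i2 ∧ i1 ≠ j1 ∧ i1 ≠ j2 ∧ i2 ≠ j1 ∧ i2 ≠ j2 ∧ j1 ≠ j2) then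
        Ω i1 j1 * Ω i1 j2 * Ω i2 j1 * Ω i2 j2 else 0)
      ≤ C ^ 4 * ((d i1 i2 + d i1 j1 + d i1 j2 + d i2 j1 + d i2 j2 + d j1 j2)
          * (θ i1 ^ 2 * θ i2 ^ 2 * ζ j1 ^ 2 * ζ j2 ^ 2)) := by
    intro i1 i2 j1 j2
    have hrhs : (0:ℝ) ≤ C ^ 4 * ((d i1 i2 + d i1 j1 + d i1 j2 + d i2 j1
        + d i2 j2 + d j1 j2) * (θ i1 ^ 2 * θ i2 ^ 2 * ζ j1 ^ 2 * ζ j2 ^ 2)) := by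
      apply mul_nonneg (by positivity)
      apply mul_nonneg _ (hp _ _ _ _)
      have := hd0 i1 i2; have := hd0 i1 j1; have := hd0 i1 j2
      have := hd0 i2 j1; have := hd0 i2 j2; have := hd0 j1 j2
      linarith
    by_cases h : (i1 ≠ i2 ∧ i1 ≠ j1 ∧ i1 ≠ j2 ∧ i2 ≠ j1 ∧ i2 ≠ j2 ∧ j1 ≠ j2)
    · rw [if_neg (not_not_intro h)]
      exact hrhs
    · rw [if_pos h]
      have heq : i1 = i2 ∨ i1 = j1 ∨ i1 = j2 ∨ i2 = j1 ∨ i2 = j2 ∨ j1 = j2 := by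
        by_contra hc
        push_neg at hc
        exact h ⟨hc.1, hc.2.1, hc.2.2.1, hc.2.2.2.1, hc.2.2.2.2.1, hc.2.2.2.2.2⟩
      have hge1 : (1:ℝ) ≤ d i1 i2 + d i1 j1 + d i1 j2 + d i2 j1 + d i2 j2
          + d j1 j2 := by
        rcases heq with h'|h'|h'|h'|h'|h' <;>
          linarith [hd1 _ _ h', hd0 i1 i2, hd0 i1 j1, hd0 i1 j2, hd0 i2 j1,
            hd0 i2 j2, hd0 j1 j2]
      calc Ω i1 j1 * Ω i1 j2 * Ω i2 j1 * Ω i2 j2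
          ≤ C ^ 4 * (θ i1 ^ 2 * θ i2 ^ 2 * ζ j1 ^ 2 * ζ j2 ^ 2) := hprod _ _ _ _
        _ = 1 * (C ^ 4 * (θ i1 ^ 2 * θ i2 ^ 2 * ζ j1 ^ 2 * ζ j2 ^ 2)) := by ring
        _ ≤ (d i1 i2 + d i1 j1 + d i1 j2 + d i2 j1 + d i2 j2 + d j1 j2)
              * (C ^ 4 * (θ i1 ^ 2 * θ i2 ^ 2 * ζ j1 ^ 2 * ζ j2 ^ 2)) := by
            apply mul_le_mul_of_nonneg_right hge1 (by positivity)
        _ = C ^ 4 * ((d i1 i2 + d i1 j1 + d i1 j2 + d i2 j1 + d i2 j2 + d j1 j2)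
              * (θ i1 ^ 2 * θ i2 ^ 2 * ζ j1 ^ 2 * ζ j2 ^ 2)) := by ring
  calc (∑ i1 : Fin n, ∑ i2 : Fin n, ∑ j1 : Fin n, ∑ j2 : Fin n,
      if ¬(i1 ≠ i2 ∧ i1 ≠ j1 ∧ i1 ≠ j2 ∧ i2 ≠ j1 ∧ i2 ≠ j2 ∧ j1 ≠ j2) then
        Ω i1 j1 * Ω i1 j2 * Ω i2 j1 * Ω i2 j2 else 0)
      ≤ ∑ i1 : Fin n, ∑ i2 : Fin n, ∑ j1 : Fin n, ∑ j2 : Fin n,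
          C ^ 4 * ((d i1 i2 + d i1 j1 + d i1 j2 + d i2 j1 + d i2 j2 + d j1 j2)
            * (θ i1 ^ 2 * θ i2 ^ 2 * ζ j1 ^ 2 * ζ j2 ^ 2)) := by
        refine Finset.sum_le_sum fun i1 _ => Finset.sum_le_sum fun i2 _ =>
          Finset.sum_le_sum fun j1 _ => Finset.sum_le_sum fun j2 _ => key i1 i2 j1 j2
    _ = C ^ 4 * ((∑ i1 : Fin n, ∑ i2 : Fin n, ∑ j1 : Fin n, ∑ j2 : Fin n,
            d i1 i2 * (θ i1 ^ 2 * θ i2 ^ 2 * ζ j1 ^ 2 * ζ j2 ^ 2))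
          + (∑ i1 : Fin n, ∑ i2 : Fin n, ∑ j1 : Fin n, ∑ j2 : Fin n,
            d i1 j1 * (θ i1 ^ 2 * θ i2 ^ 2 * ζ j1 ^ 2 * ζ j2 ^ 2))
          + (∑ i1 : Fin n, ∑ i2 : Fin n, ∑ j1 : Fin n, ∑ j2 : Fin n,
            d i1 j2 * (θ i1 ^ 2 * θ i2 ^ 2 * ζ j1 ^ 2 * ζ j2 ^ 2))
          + (∑ i1 : Fin n, ∑ i2 : Fin n, ∑ j1 : Fin n, ∑ j2 : Fin n,
            d i2 j1 * (θ i1 ^ 2 * θ i2 ^ 2 * ζ j1 ^ 2 * ζ j2 ^ 2))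
          + (∑ i1 : Fin n, ∑ i2 : Fin n, ∑ j1 : Fin n, ∑ j2 : Fin n,
            d i2 j2 * (θ i1 ^ 2 * θ i2 ^ 2 * ζ j1 ^ 2 * ζ j2 ^ 2))
          + (∑ i1 : Fin n, ∑ i2 : Fin n, ∑ j1 : Fin n, ∑ j2 : Fin n,
            d j1 j2 * (θ i1 ^ 2 * θ i2 ^ 2 * ζ j1 ^ 2 * ζ j2 ^ 2))) := by
        conv_lhs => simp only [← Finset.mul_sum]
        congr 1
        conv_lhs => simp only [add_mul, Finset.sum_add_distrib]
    _ ≤ 3 * C ^ 4 * ((∑ i, θ i ^ 2) ^ 2 * (∑ j, ζ j ^ 4)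
        + (∑ j, ζ j ^ 2) ^ 2 * (∑ i, θ i ^ 4)) := by
        have E1 : (∑ i1 : Fin n, ∑ i2 : Fin n, ∑ j1 : Fin n, ∑ j2 : Fin n,
            d i1 i2 * (θ i1 ^ 2 * θ i2 ^ 2 * ζ j1 ^ 2 * ζ j2 ^ 2))
            = (∑ i, θ i ^ 2 * θ i ^ 2) * ((∑ j, ζ j ^ 2) * (∑ j, ζ j ^ 2)) := by
          simp only [hd]
          try simp only [← Finset.mul_sum]
          simp only [ite_mul, one_mul, zero_mul, Finset.sum_ite_eq,
            Finset.mem_univ, if_true]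
          rw [Finset.sum_mul_sum, Finset.sum_mul_sum]
          try simp only [Finset.mul_sum, mul_assoc]
          all_goals exact Finset.sum_congr rfl fun x _ =>
            Finset.sum_congr rfl fun y _ =>
            Finset.sum_congr rfl fun z _ => by ring
        have E2 : (∑ i1 : Fin n, ∑ i2 : Fin n, ∑ j1 : Fin n, ∑ j2 : Fin n,
            d i1 j1 * (θ i1 ^ 2 * θ i2 ^ 2 * ζ j1 ^ 2 * ζ j2 ^ 2))
            = (∑ i, θ i ^ 2 * ζ i ^ 2) * ((∑ i, θ i ^ 2) * (∑ j, ζ j ^ 2)) := by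
          simp only [hd]
          try simp only [← Finset.mul_sum]
          simp only [ite_mul, one_mul, zero_mul, Finset.sum_ite_eq,
            Finset.mem_univ, if_true]
          rw [Finset.sum_mul_sum, Finset.sum_mul_sum]
          try simp only [Finset.mul_sum, mul_assoc]
          all_goals exact Finset.sum_congr rfl fun x _ =>
            Finset.sum_congr rfl fun y _ =>
            Finset.sum_congr rfl fun z _ => by ring
        have E3 : (∑ i1 : Fin n, ∑ i2 : Fin n, ∑ j1 : Fin n, ∑ j2 : Fin n,
            d i1 j2 * (θ i1 ^ 2 * θ i2 ^ 2 * ζ j1 ^ 2 * ζ j2 ^ 2))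
            = (∑ i, θ i ^ 2 * ζ i ^ 2) * ((∑ i, θ i ^ 2) * (∑ j, ζ j ^ 2)) := by
          simp only [hd]
          try simp only [← Finset.mul_sum]
          simp only [ite_mul, one_mul, zero_mul, Finset.sum_ite_eq,
            Finset.mem_univ, if_true]
          rw [Finset.sum_mul_sum, Finset.sum_mul_sum]
          try simp only [Finset.mul_sum, mul_assoc]
          all_goals exact Finset.sum_congr rfl fun x _ =>
            Finset.sum_congr rfl fun y _ =>
            Finset.sum_congr rfl fun z _ => by ring
        have E4 : (∑ i1 : Fin n, ∑ i2 : Fin n, ∑ j1 : Fin n, ∑ j2 : Fin n,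
            d i2 j1 * (θ i1 ^ 2 * θ i2 ^ 2 * ζ j1 ^ 2 * ζ j2 ^ 2))
            = (∑ i, θ i ^ 2) * ((∑ i, θ i ^ 2 * ζ i ^ 2) * (∑ j, ζ j ^ 2)) := by
          simp only [hd]
          try simp only [← Finset.mul_sum]
          simp only [ite_mul, one_mul, zero_mul, Finset.sum_ite_eq,
            Finset.mem_univ, if_true]
          rw [Finset.sum_mul_sum, Finset.sum_mul_sum]
          try simp only [Finset.mul_sum, mul_assoc]
          all_goals exact Finset.sum_congr rfl fun x _ =>
            Finset.sum_congr rfl fun y _ =>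
            Finset.sum_congr rfl fun z _ => by ring
        have E5 : (∑ i1 : Fin n, ∑ i2 : Fin n, ∑ j1 : Fin n, ∑ j2 : Fin n,
            d i2 j2 * (θ i1 ^ 2 * θ i2 ^ 2 * ζ j1 ^ 2 * ζ j2 ^ 2))
            = (∑ i, θ i ^ 2) * ((∑ i, θ i ^ 2 * ζ i ^ 2) * (∑ j, ζ j ^ 2)) := by
          simp only [hd]
          try simp only [← Finset.mul_sum]
          simp only [ite_mul, one_mul, zero_mul, Finset.sum_ite_eq,
            Finset.mem_univ, if_true]
          rw [Finset.sum_mul_sum, Finset.sum_mul_sum]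
          try simp only [Finset.mul_sum, mul_assoc]
          all_goals exact Finset.sum_congr rfl fun x _ =>
            Finset.sum_congr rfl fun y _ =>
            Finset.sum_congr rfl fun z _ => by ring
        have E6 : (∑ i1 : Fin n, ∑ i2 : Fin n, ∑ j1 : Fin n, ∑ j2 : Fin n,
            d j1 j2 * (θ i1 ^ 2 * θ i2 ^ 2 * ζ j1 ^ 2 * ζ j2 ^ 2))
            = (∑ i, θ i ^ 2) * ((∑ i, θ i ^ 2) * (∑ j, ζ j ^ 2 * ζ j ^ 2)) := by
          simp only [hd]
          try simp only [← Finset.mul_sum]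
          simp only [ite_mul, one_mul, zero_mul, Finset.sum_ite_eq,
            Finset.mem_univ, if_true]
          rw [Finset.sum_mul_sum, Finset.sum_mul_sum]
          try simp only [Finset.mul_sum, mul_assoc]
          all_goals exact Finset.sum_congr rfl fun x _ =>
            Finset.sum_congr rfl fun y _ =>
            Finset.sum_congr rfl fun z _ => by ring
        rw [E1, E2, E3, E4, E5, E6]
        have hX : (∑ i, θ i ^ 2 * θ i ^ 2) = ∑ i, θ i ^ 4 :=
          Finset.sum_congr rfl fun i _ => by ring
        have hY : (∑ j, ζ j ^ 2 * ζ j ^ 2) = ∑ j, ζ j ^ 4 :=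
          Finset.sum_congr rfl fun j _ => by ring
        rw [hX, hY]
        have hCS := Finset.sum_mul_sq_le_sq_mul_sq Finset.univ
          (fun i => θ i ^ 2) (fun i => ζ i ^ 2)
        have hX4 : (∑ i, (θ i ^ 2) ^ 2) = ∑ i, θ i ^ 4 :=
          Finset.sum_congr rfl fun i _ => by ring
        have hY4 : (∑ j, (ζ j ^ 2) ^ 2) = ∑ j, ζ j ^ 4 :=
          Finset.sum_congr rfl fun j _ => by ring
        rw [hX4, hY4] at hCS
        have hA : (0:ℝ) ≤ ∑ i, θ i ^ 2 := Finset.sum_nonneg fun i _ => sq_nonneg _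
        have hB : (0:ℝ) ≤ ∑ j, ζ j ^ 2 := Finset.sum_nonneg fun j _ => sq_nonneg _
        have hXn : (0:ℝ) ≤ ∑ i, θ i ^ 4 :=
          Finset.sum_nonneg fun i _ => by positivity
        have hYn : (0:ℝ) ≤ ∑ j, ζ j ^ 4 :=
          Finset.sum_nonneg fun j _ => by positivity
        have hTn : (0:ℝ) ≤ ∑ i, θ i ^ 2 * ζ i ^ 2 :=
          Finset.sum_nonneg fun i _ => by positivity
        set A := ∑ i, θ i ^ 2
        set B := ∑ j, ζ j ^ 2
        set X := ∑ i, θ i ^ 4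
        set Y := ∑ j, ζ j ^ 4
        set T := ∑ i, θ i ^ 2 * ζ i ^ 2
        have hC4 : (0:ℝ) ≤ C ^ 4 := by positivity
        have h1 : (T * (A * B)) ^ 2 ≤ (X * B ^ 2) * (Y * A ^ 2) := by
          have h0 := mul_le_mul_of_nonneg_right hCS (sq_nonneg (A * B))
          calc (T * (A * B)) ^ 2 = T ^ 2 * (A * B) ^ 2 := by ring
            _ ≤ X * Y * (A * B) ^ 2 := h0
            _ = (X * B ^ 2) * (Y * A ^ 2) := by ring
        have key2 : 2 * (T * (A * B)) ≤ X * B ^ 2 + Y * A ^ 2 :=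
          amgm_aux _ _ _ (mul_nonneg hXn (sq_nonneg B))
            (mul_nonneg hYn (sq_nonneg A))
            (mul_nonneg hTn (mul_nonneg hA hB)) h1
        have h2 : X * (B * B) + T * (A * B) + T * (A * B) + A * (T * B)
            + A * (T * B) + A * (A * Y) ≤ 3 * (A ^ 2 * Y + B ^ 2 * X) := by
          nlinarith [key2]
        calc C ^ 4 * (X * (B * B) + T * (A * B) + T * (A * B) + A * (T * B)
              + A * (T * B) + A * (A * Y))
            ≤ C ^ 4 * (3 * (A ^ 2 * Y + B ^ 2 * X)) :=
              mul_le_mul_of_nonneg_left h2 hC4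
          _ = 3 * C ^ 4 * (A ^ 2 * Y + B ^ 2 * X) := by ring
end
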